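/- arXiv:1804.03452 — 2 statements merged into one kernel-verified Lean document; each statement's English description precedes it below -/
import Mathlib

section
/- Let Lx, Ly, Lz and m be positive integers with 2m < Lx, 2m < Ly and 2m < Lz. Then the number of unordered pairs {a, b} of distinct sites of the Lx × Ly × Lz cuboidal lattice whose periodic taxicab distance equals m is exactly (2m² + 1)·Lx·Ly·Lz. -/
/-- The site set of the `Lx × Ly × Lz` cuboidal lattice. -/
def cubeSites (Lx Ly Lz : ℕ) : Finset (ℕ × ℕ × ℕ) :=
  Finset.range Lx ×ˢ (Finset.range Ly ×ˢ Finset.range Lz)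

/-- The taxicab distance under periodic boundary conditions on an
`Lx × Ly × Lz` cuboidal lattice. -/
def periodicTaxicabDist3 (Lx Ly Lz : ℕ) (a b : ℕ × ℕ × ℕ) : ℕ :=
  min (Nat.dist a.1 b.1) (Lx - Nat.dist a.1 b.1) +
    min (Nat.dist a.2.1 b.2.1) (Ly - Nat.dist a.2.1 b.2.1) +
    min (Nat.dist a.2.2 b.2.2) (Lz - Nat.dist a.2.2 b.2.2)

/-!
Since `2m < L` in each direction, the sphere of radius `m` around a site of the torus does not
wrap around: in each coordinate the sites at cyclic distance `k ≤ m` are `a ± k (mod L)`, one site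
for `k = 0` and two for `k > 0`, exactly as in `ℤ`. Hence the sphere has as many sites as the
taxicab sphere of radius `m` in `ℤ³`, namely `4m² + 2`, so there are `(4m² + 2) Lx Ly Lz` ordered
pairs at distance `m`, twice the number of unordered ones.
-/

open Finset

def cycleDist (L a b : ℕ) : ℕ := min (Nat.dist a b) (L - Nat.dist a b)

theorem periodicTaxicabDist3_eq (Lx Ly Lz : ℕ) (a b : ℕ × ℕ × ℕ) :
    periodicTaxicabDist3 Lx Ly Lz a b =
      cycleDist Lx a.1 b.1 + (cycleDist Ly a.2.1 b.2.1 + cycleDist Lz a.2.2 b.2.2) :=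
  add_assoc _ _ _

theorem periodicTaxicabDist3_comm (Lx Ly Lz : ℕ) (a b : ℕ × ℕ × ℕ) :
    periodicTaxicabDist3 Lx Ly Lz a b = periodicTaxicabDist3 Lx Ly Lz b a := by
  simp only [periodicTaxicabDist3, Nat.dist_comm]

theorem periodicTaxicabDist3_self (Lx Ly Lz : ℕ) (a : ℕ × ℕ × ℕ) :
    periodicTaxicabDist3 Lx Ly Lz a a = 0 := by
  simp [periodicTaxicabDist3]

theorem card_cubeSites (Lx Ly Lz : ℕ) : #(cubeSites Lx Ly Lz) = Lx * (Ly * Lz) := by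
  simp only [cubeSites, card_product, card_range]

-- The number of `x : ℤ` with `|x| = k`.
def lineSphereCard (k : ℕ) : ℕ := if k = 0 then 1 else 2

theorem lineSphereCard_zero : lineSphereCard 0 = 1 := rfl

theorem lineSphereCard_succ (k : ℕ) : lineSphereCard (k + 1) = 2 := rfl

theorem card_filter_cycleDist_eq {L a k : ℕ} (ha : a < L) (hk : 2 * k < L) :
    #{b ∈ range L | cycleDist L a b = k} = lineSphereCard k := by
  rw [lineSphereCard]
  split_ifs with hk0
  · rw [card_eq_one]
    refine ⟨a, ?_⟩
    ext b
    simp only [mem_filter, mem_range, mem_singleton]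
    unfold cycleDist Nat.dist
    omega
  · rw [card_eq_two]
    refine ⟨if a + k < L then a + k else a + k - L, if k ≤ a then a - k else a + L - k, ?_, ?_⟩
    · split_ifs <;> omega
    · ext b
      simp only [mem_filter, mem_range, mem_insert, mem_singleton]
      unfold cycleDist Nat.dist
      split_ifs <;> omega

theorem card_filter_add_eq {α β : Type*} (s : Finset α) (t : Finset β) (f : α → ℕ) (g : β → ℕ)
    (n : ℕ) :
    #{p ∈ s ×ˢ t | f p.1 + g p.2 = n} =
      ∑ ij ∈ antidiagonal n, #{x ∈ s | f x = ij.1} * #{y ∈ t | g y = ij.2} := by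
  rw [card_eq_sum_card_fiberwise (f := fun p : α × β => (f p.1, g p.2)) (t := antidiagonal n)
    fun p hp => HasAntidiagonal.mem_antidiagonal.2 (mem_filter.1 hp).2]
  refine sum_congr rfl fun ij hij => ?_
  rw [← card_product, filter_filter, ← filter_product]
  congr 1
  refine filter_congr fun p _ => ?_
  rw [HasAntidiagonal.mem_antidiagonal] at hij
  constructor
  · rintro ⟨-, h⟩
    exact Prod.ext_iff.1 h
  · rintro ⟨h1, h2⟩
    exact ⟨by simp only [h1, h2, hij], Prod.ext h1 h2⟩

theorem sum_range_lineSphereCard (n : ℕ) : ∑ k ∈ range (n + 1), lineSphereCard k = 2 * n + 1 := by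
  induction n with
  | zero => rfl
  | succ n ih => rw [sum_range_succ, ih, lineSphereCard_succ]; ring

-- The number of `x : ℤ × ℤ` with `|x.1| + |x.2| = n`.
def planeSphereCard (n : ℕ) : ℕ :=
  ∑ ij ∈ antidiagonal n, lineSphereCard ij.1 * lineSphereCard ij.2

theorem planeSphereCard_succ (n : ℕ) : planeSphereCard (n + 1) = 4 * (n + 1) := by
  rw [planeSphereCard, Nat.sum_antidiagonal_succ', Nat.sum_antidiagonal_eq_sum_range_succ_mk]
  simp only [lineSphereCard_zero, lineSphereCard_succ, ← sum_mul, sum_range_lineSphereCard]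
  ring

theorem sum_range_planeSphereCard (n : ℕ) :
    ∑ j ∈ range (n + 1), planeSphereCard j = 2 * n ^ 2 + 2 * n + 1 := by
  induction n with
  | zero => rfl
  | succ n ih => rw [sum_range_succ, ih, planeSphereCard_succ]; ring

theorem sum_antidiagonal_lineSphereCard_mul_planeSphereCard (n : ℕ) :
    ∑ ij ∈ antidiagonal (n + 1), lineSphereCard ij.1 * planeSphereCard ij.2 =
      4 * (n + 1) ^ 2 + 2 := by
  rw [Nat.sum_antidiagonal_succ, ← Nat.sum_antidiagonal_swap,
    Nat.sum_antidiagonal_eq_sum_range_succ_mk]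
  simp only [Prod.swap, lineSphereCard_zero, lineSphereCard_succ, planeSphereCard_succ, ← mul_sum,
    sum_range_planeSphereCard]
  ring

theorem card_filter_periodicTaxicabDist3_eq {Lx Ly Lz m : ℕ} {a : ℕ × ℕ × ℕ}
    (ha : a ∈ cubeSites Lx Ly Lz) (hx : 2 * m < Lx) (hy : 2 * m < Ly) (hz : 2 * m < Lz) :
    #{b ∈ cubeSites Lx Ly Lz | periodicTaxicabDist3 Lx Ly Lz a b = m} =
      ∑ ij ∈ antidiagonal m, lineSphereCard ij.1 * planeSphereCard ij.2 := by
  simp only [cubeSites, mem_product, mem_range] at ha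
  simp only [cubeSites, periodicTaxicabDist3_eq]
  rw [card_filter_add_eq _ _ (cycleDist Lx a.1)
    (fun q : ℕ × ℕ => cycleDist Ly a.2.1 q.1 + cycleDist Lz a.2.2 q.2)]
  refine sum_congr rfl fun ij hij => ?_
  rw [HasAntidiagonal.mem_antidiagonal] at hij
  rw [card_filter_cycleDist_eq ha.1 (by omega), card_filter_add_eq _ _ (cycleDist Ly a.2.1)
    (cycleDist Lz a.2.2), planeSphereCard]
  congr 1
  refine sum_congr rfl fun kl hkl => ?_
  rw [HasAntidiagonal.mem_antidiagonal] at hkl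
  rw [card_filter_cycleDist_eq ha.2.1 (by omega), card_filter_cycleDist_eq ha.2.2 (by omega)]

theorem card_filter_product_eq_sum {α β : Type*} (s : Finset α) (t : Finset β)
    (r : α → β → Prop) [DecidableRel r] :
    #{q ∈ s ×ˢ t | r q.1 q.2} = ∑ a ∈ s, #{b ∈ t | r a b} := by
  simp only [card_filter, sum_product]

theorem two_mul_card_filter_powersetCard_two {α : Type*} [DecidableEq α] (s : Finset α)
    (r : α → α → Prop) [DecidableRel r] (hr : ∀ a b, r a b → r b a) :
    2 * #{p ∈ s.powersetCard 2 | ∃ a ∈ p, ∃ b ∈ p, a ≠ b ∧ r a b} =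
      #{q ∈ s ×ˢ s | q.1 ≠ q.2 ∧ r q.1 q.2} := by
  rw [card_eq_sum_card_fiberwise (f := fun q : α × α => ({q.1, q.2} : Finset α))
    (t := {p ∈ s.powersetCard 2 | ∃ a ∈ p, ∃ b ∈ p, a ≠ b ∧ r a b})]
  · rw [sum_const_nat (m := 2), mul_comm]
    intro p hp
    obtain ⟨⟨hps, hp2⟩, a, ha, b, hb, hab, hrab⟩ := by
      simpa only [mem_filter, mem_powersetCard] using hp
    obtain rfl : p = {a, b} :=
      (eq_of_subset_of_card_le (insert_subset ha (singleton_subset_iff.2 hb))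
        (by rw [hp2, card_pair hab])).symm
    have hpair (x y : α) : ({x, y} : Finset α) = {a, b} ↔ x = a ∧ y = b ∨ x = b ∧ y = a := by
      rw [← coe_inj, coe_pair, coe_pair, Set.pair_eq_pair_iff]
    have hfiber : {q ∈ {q ∈ s ×ˢ s | q.1 ≠ q.2 ∧ r q.1 q.2} | ({q.1, q.2} : Finset α) = {a, b}} =
        {(a, b), (b, a)} := by
      ext ⟨x, y⟩
      simp only [mem_filter, mem_product, mem_insert, mem_singleton, Prod.mk.injEq, hpair]
      constructor
      · exact fun h => h.2
      · rintro (⟨rfl, rfl⟩ | ⟨rfl, rfl⟩)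
        · exact ⟨⟨⟨hps ha, hps hb⟩, hab, hrab⟩, .inl ⟨rfl, rfl⟩⟩
        · exact ⟨⟨⟨hps hb, hps ha⟩, hab.symm, hr _ _ hrab⟩, .inr ⟨rfl, rfl⟩⟩
    rw [hfiber, card_pair (by simp [hab])]
  · intro q hq
    rw [mem_coe, mem_filter, mem_product] at hq
    rw [mem_coe, mem_filter]
    obtain ⟨⟨h1, h2⟩, hne, hq⟩ := hq
    exact ⟨mem_powersetCard.2 ⟨insert_subset h1 (singleton_subset_iff.2 h2), card_pair hne⟩,
      q.1, mem_insert_self _ _, q.2, mem_insert_of_mem (mem_singleton_self _), hne, hq⟩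

theorem periodic_taxicab_pair_count_3d_general (Lx Ly Lz m : ℕ)
    (hm : 0 < m)
    (hmx : 2 * m < Lx) (hmy : 2 * m < Ly) (hmz : 2 * m < Lz) :
    (((cubeSites Lx Ly Lz).powersetCard 2).filter
      (fun p => ∃ a ∈ p, ∃ b ∈ p, a ≠ b ∧ periodicTaxicabDist3 Lx Ly Lz a b = m)).card
      = (2 * m ^ 2 + 1) * Lx * Ly * Lz := by
  obtain ⟨n, rfl⟩ := Nat.exists_eq_add_one_of_ne_zero hm.ne'
  have hsphere : ∀ a ∈ cubeSites Lx Ly Lz,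
      #{b ∈ cubeSites Lx Ly Lz | a ≠ b ∧ periodicTaxicabDist3 Lx Ly Lz a b = n + 1} =
        4 * (n + 1) ^ 2 + 2 := fun a ha => by
    rw [← sum_antidiagonal_lineSphereCard_mul_planeSphereCard,
      ← card_filter_periodicTaxicabDist3_eq ha hmx hmy hmz]
    refine congrArg card (filter_congr fun b _ => and_iff_right_of_imp ?_)
    rintro hd rfl
    rw [periodicTaxicabDist3_self] at hd
    exact n.succ_ne_zero hd.symm
  have hpairs := two_mul_card_filter_powersetCard_two (cubeSites Lx Ly Lz)
    (fun a b => periodicTaxicabDist3 Lx Ly Lz a b = n + 1)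
    fun a b h => (periodicTaxicabDist3_comm Lx Ly Lz b a).trans h
  rw [card_filter_product_eq_sum
      (r := fun a b => a ≠ b ∧ periodicTaxicabDist3 Lx Ly Lz a b = n + 1),
    sum_congr rfl hsphere, sum_const, smul_eq_mul, card_cubeSites] at hpairs
  linarith

/-- For `0 < m` with `2m < Lx`, `2m < Ly`, `2m < Lz`, the number of unordered pairs of
distinct sites of the `Lx × Ly × Lz` cuboidal lattice at periodic taxicab distance
exactly `m` is `(2 m² + 1) Lx Ly Lz`. -/
theorem periodic_taxicab_pair_count_3d (Lx Ly Lz m : ℕ)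
    (hLx : 0 < Lx) (hLy : 0 < Ly) (hLz : 0 < Lz) (hm : 0 < m)
    (hmx : 2 * m < Lx) (hmy : 2 * m < Ly) (hmz : 2 * m < Lz) :
    (((cubeSites Lx Ly Lz).powersetCard 2).filter
      (fun p => ∃ a ∈ p, ∃ b ∈ p, a ≠ b ∧ periodicTaxicabDist3 Lx Ly Lz a b = m)).card
      = (2 * m ^ 2 + 1) * Lx * Ly * Lz :=
  periodic_taxicab_pair_count_3d_general Lx Ly Lz m hm hmx hmy hmz
end

section
/- Let Lx, Ly, m and N be positive integers with 2m < Lx, 2m < Ly, 2 ≤ N ≤ Lx·Ly. If N sites of the Lx × Ly lattice are occupied uniformly at random (averaging over all N-element subsets of the Lx·Ly sites), then the expected number of unordered pairs of occupied sites at periodic taxicab distance exactly m equals 2·m·N·(N−1)/(Lx·Ly − 1). -/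
/-- The site set of the `Lx × Ly` square lattice. -/
def latticeSites (Lx Ly : ℕ) : Finset (ℕ × ℕ) :=
  Finset.range Lx ×ˢ Finset.range Ly

/-- The taxicab distance under periodic boundary conditions on an `Lx × Ly` lattice. -/
def periodicTaxicabDist (Lx Ly : ℕ) (a b : ℕ × ℕ) : ℕ :=
  min (Nat.dist a.1 b.1) (Lx - Nat.dist a.1 b.1) +
    min (Nat.dist a.2 b.2) (Ly - Nat.dist a.2 b.2)

/-- The number of unordered pairs of occupied sites (of a configuration `M`) at periodic
taxicab distance exactly `m`. -/
def pairCount (Lx Ly m : ℕ) (M : Finset (ℕ × ℕ)) : ℕ :=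
  ((M.powersetCard 2).filter
    (fun p => ∃ a ∈ p, ∃ b ∈ p, a ≠ b ∧ periodicTaxicabDist Lx Ly a b = m)).card


/-!
Each unordered pair of sites at distance `m` lies in exactly `C(L - 2, N - 2)` of the `C(L, N)`
configurations (`L = Lx Ly`), so the expectation is `#pairs · C(L - 2, N - 2) / C(L, N)
= #pairs · N (N - 1) / (L (L - 1))`. Since `2 m < Lx, Ly`, no wrap-around identifies points of
the periodic taxicab sphere of radius `m`, so every site has exactly `4 m` sites at distance `m`,
and counting incidences gives `#pairs = 4 m L / 2 = 2 m L`.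
-/

open Finset

section PairsWith

variable {α : Type*} [DecidableEq α] (r : α → α → Prop) [DecidableRel r]

def pairsWith (s : Finset α) : Finset (Finset α) :=
  {p ∈ s.powersetCard 2 | ∃ a ∈ p, ∃ b ∈ p, a ≠ b ∧ r a b}

variable {r}

theorem filter_pairsWith_subset {s t : Finset α} (hts : t ⊆ s) :
    {p ∈ pairsWith r s | p ⊆ t} = pairsWith r t := by
  ext p
  simp only [pairsWith, mem_filter, mem_powersetCard]
  exact ⟨fun ⟨⟨⟨_, hp⟩, hr⟩, hpt⟩ => ⟨⟨hpt, hp⟩, hr⟩,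
    fun ⟨⟨hpt, hp⟩, hr⟩ => ⟨⟨⟨hpt.trans hts, hp⟩, hr⟩, hpt⟩⟩

theorem sum_card_pairsWith_powersetCard (s : Finset α) {N : ℕ} (hN : 2 ≤ N) :
    ∑ t ∈ s.powersetCard N, #(pairsWith r t) = #(pairsWith r s) * (#s - 2).choose (N - 2) := by
  calc ∑ t ∈ s.powersetCard N, #(pairsWith r t)
      = ∑ t ∈ s.powersetCard N, #((pairsWith r s).bipartiteAbove (fun t p => p ⊆ t) t) := by
        refine sum_congr rfl fun t ht => ?_
        rw [bipartiteAbove, filter_pairsWith_subset (mem_powersetCard.1 ht).1]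
    _ = ∑ p ∈ pairsWith r s, #((s.powersetCard N).bipartiteBelow (fun t p => p ⊆ t) p) :=
        sum_card_bipartiteAbove_eq_sum_card_bipartiteBelow _
    _ = #(pairsWith r s) * (#s - 2).choose (N - 2) := by
        refine sum_const_nat fun p hp => ?_
        obtain ⟨hps, hp2⟩ := mem_powersetCard.1 (mem_filter.1 hp).1
        rw [bipartiteBelow, card_filter_powersetCard_subset p s N hps (hp2 ▸ hN), hp2]

theorem card_pairsWith_mul_two (hr : ∀ a b, r a b → r b a) {s : Finset α} {d : ℕ}
    (hd : ∀ a ∈ s, #{b ∈ s | a ≠ b ∧ r a b} = d) :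
    #(pairsWith r s) * 2 = #s * d := by
  symm
  refine card_mul_eq_card_mul (· ∈ ·) (fun a ha => ?_) (fun p hp => ?_)
  · have hpairs :
        {p ∈ pairsWith r s | a ∈ p} = {b ∈ s | a ≠ b ∧ r a b}.image ({a, ·}) := by
      ext p
      simp only [pairsWith, mem_filter, mem_powersetCard, mem_image, card_eq_two]
      constructor
      · rintro ⟨⟨⟨hps, x, y, hxy, rfl⟩, u, hu, v, hv, huv, hr⟩, hap⟩
        grind
      · rintro ⟨b, ⟨hb, hab, hr⟩, rfl⟩
        grind
    rw [← hd a ha, bipartiteAbove, hpairs, card_image_of_injOn]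
    intro b hb b' _ h
    have hb_mem : b ∈ ({a, b'} : Finset α) := by
      rw [← show ({a, b} : Finset α) = {a, b'} from h]
      exact mem_insert_of_mem (mem_singleton_self b)
    rw [mem_insert, mem_singleton] at hb_mem
    exact hb_mem.resolve_left (mem_filter.1 hb).2.1.symm
  · obtain ⟨hps, hp2⟩ := mem_powersetCard.1 (mem_filter.1 hp).1
    rw [bipartiteBelow, filter_mem_eq_inter, inter_eq_right.2 hps, hp2]

end PairsWith

theorem Nat.choose_sub_two_mul {L N : ℕ} (hN : 2 ≤ N) :
    (L - 2).choose (N - 2) * (L * (L - 1)) = L.choose N * (N * (N - 1)) := by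
  obtain ⟨n, rfl⟩ := Nat.exists_eq_add_of_le' hN
  rcases lt_or_ge L 2 with hL | hL
  · interval_cases L <;> simp [Nat.choose_eq_zero_of_lt]
  obtain ⟨l, rfl⟩ := Nat.exists_eq_add_of_le' hL
  have h₁ := Nat.add_one_mul_choose_eq l n
  have h₂ := Nat.add_one_mul_choose_eq (l + 1) (n + 1)
  simp only [Nat.add_sub_cancel]
  calc l.choose n * ((l + 2) * (l + 1)) = (l + 2) * ((l + 1) * l.choose n) := by ring
    _ = (l + 2) * (l + 1).choose (n + 1) * (n + 1) := by rw [h₁]; ring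
    _ = (l + 2).choose (n + 2) * ((n + 2) * (n + 1)) := by rw [h₂]; ring

def cyclicDist (L a b : ℕ) : ℕ :=
  min (Nat.dist a b) (L - Nat.dist a b)

theorem card_filter_cyclicDist_eq {L a k : ℕ} (ha : a < L) (hk : 2 * k < L) :
    #{b ∈ range L | cyclicDist L a b = k} = if k = 0 then 1 else 2 := by
  rcases Nat.eq_zero_or_pos k with rfl | hk0
  · refine card_eq_one.2 ⟨a, ext fun b => ?_⟩
    simp only [mem_filter, mem_range, mem_singleton]
    simp only [cyclicDist, Nat.dist]
    omega
  have hsphere : {b ∈ range L | cyclicDist L a b = k} =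
      {if a + k < L then a + k else a + k - L, if k ≤ a then a - k else a + L - k} := by
    ext b
    simp only [mem_filter, mem_range, mem_insert, mem_singleton]
    simp only [cyclicDist, Nat.dist]
    split_ifs <;> omega
  rw [if_neg hk0.ne', hsphere, card_pair (by split_ifs <;> omega)]

theorem sum_antidiagonal_ite_mul_ite {m : ℕ} (hm : 0 < m) :
    ∑ ij ∈ antidiagonal m, (if ij.1 = 0 then 1 else 2) * (if ij.2 = 0 then 1 else 2)
      = 4 * m := by
  obtain ⟨n, rfl⟩ := Nat.exists_eq_add_one_of_ne_zero hm.ne'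
  have hinterior : ∀ k ∈ range n,
      (if k + 1 = 0 then 1 else 2) * (if n + 1 - (k + 1) = 0 then 1 else 2) = 4 := by
    intro k hk
    rw [mem_range] at hk
    rw [if_neg (by omega), if_neg (by omega)]
  rw [Nat.sum_antidiagonal_eq_sum_range_succ_mk, sum_range_succ, sum_range_succ',
    sum_congr rfl hinterior, sum_const, card_range]
  simp
  ring

theorem card_latticeSites (Lx Ly : ℕ) : #(latticeSites Lx Ly) = Lx * Ly := by
  rw [latticeSites, card_product, card_range, card_range]

theorem periodicTaxicabDist_eq_cyclicDist_add (Lx Ly : ℕ) (a b : ℕ × ℕ) :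
    periodicTaxicabDist Lx Ly a b = cyclicDist Lx a.1 b.1 + cyclicDist Ly a.2 b.2 := rfl

theorem periodicTaxicabDist_comm (Lx Ly : ℕ) (a b : ℕ × ℕ) :
    periodicTaxicabDist Lx Ly a b = periodicTaxicabDist Lx Ly b a := by
  simp only [periodicTaxicabDist, Nat.dist_comm]

theorem periodicTaxicabDist_self (Lx Ly : ℕ) (a : ℕ × ℕ) :
    periodicTaxicabDist Lx Ly a a = 0 := by
  simp [periodicTaxicabDist]

theorem card_filter_periodicTaxicabDist_eq {Lx Ly m : ℕ} {a : ℕ × ℕ}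
    (ha : a ∈ latticeSites Lx Ly) (hm : 0 < m) (hmx : 2 * m < Lx) (hmy : 2 * m < Ly) :
    #{b ∈ latticeSites Lx Ly | periodicTaxicabDist Lx Ly a b = m} = 4 * m := by
  obtain ⟨ha₁, ha₂⟩ := mem_product.1 ha
  have hsphere : {b ∈ latticeSites Lx Ly | periodicTaxicabDist Lx Ly a b = m} =
      (antidiagonal m).biUnion fun ij =>
        {b ∈ range Lx | cyclicDist Lx a.1 b = ij.1} ×ˢ
          {b ∈ range Ly | cyclicDist Ly a.2 b = ij.2} := by
    ext b
    simp only [mem_filter, mem_biUnion, mem_product, HasAntidiagonal.mem_antidiagonal]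
    simp only [latticeSites, mem_product, periodicTaxicabDist_eq_cyclicDist_add]
    constructor
    · rintro ⟨⟨hb₁, hb₂⟩, hb⟩
      exact ⟨(_, _), hb, ⟨hb₁, rfl⟩, ⟨hb₂, rfl⟩⟩
    · rintro ⟨ij, hij, ⟨hb₁, h₁⟩, ⟨hb₂, h₂⟩⟩
      exact ⟨⟨hb₁, hb₂⟩, by omega⟩
  rw [hsphere, card_biUnion, ← sum_antidiagonal_ite_mul_ite hm]
  · refine sum_congr rfl fun ij hij => ?_
    rw [HasAntidiagonal.mem_antidiagonal] at hij
    rw [card_product, card_filter_cyclicDist_eq (mem_range.1 ha₁) (by omega),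
      card_filter_cyclicDist_eq (mem_range.1 ha₂) (by omega)]
  · intro ij _ ij' _ hne
    refine disjoint_left.2 fun b hb hb' => hne ?_
    simp only [mem_product, mem_filter] at hb hb'
    exact Prod.ext (hb.1.2.symm.trans hb'.1.2) (hb.2.2.symm.trans hb'.2.2)

theorem card_pairsWith_periodicTaxicabDist_eq {Lx Ly m : ℕ}
    (hm : 0 < m) (hmx : 2 * m < Lx) (hmy : 2 * m < Ly) :
    #(pairsWith (fun a b => periodicTaxicabDist Lx Ly a b = m) (latticeSites Lx Ly))
      = 2 * m * (Lx * Ly) := by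
  have hdeg : ∀ a ∈ latticeSites Lx Ly,
      #{b ∈ latticeSites Lx Ly | a ≠ b ∧ periodicTaxicabDist Lx Ly a b = m} = 4 * m := by
    intro a ha
    rw [← card_filter_periodicTaxicabDist_eq ha hm hmx hmy]
    congr 1
    refine filter_congr fun b _ => and_iff_right_of_imp fun hab => ?_
    rintro rfl
    exact hm.ne (periodicTaxicabDist_self Lx Ly a ▸ hab)
  have hincidences := card_pairsWith_mul_two
    (fun a b h => (periodicTaxicabDist_comm Lx Ly b a).trans h) hdeg
  rw [card_latticeSites] at hincidences
  linarith

theorem expected_periodic_taxicab_pair_count_general (Lx Ly m N : ℕ)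
    (hm : 0 < m)
    (hmx : 2 * m < Lx) (hmy : 2 * m < Ly) (hN : 2 ≤ N) (hNle : N ≤ Lx * Ly) :
    (∑ M ∈ (latticeSites Lx Ly).powersetCard N, (pairCount Lx Ly m M : ℚ))
        / ((Lx * Ly).choose N)
      = 2 * m * N * ((N : ℚ) - 1) / ((Lx : ℚ) * (Ly : ℚ) - 1) := by
  have hsum : ∑ M ∈ (latticeSites Lx Ly).powersetCard N, pairCount Lx Ly m M
      = 2 * m * (Lx * Ly) * (Lx * Ly - 2).choose (N - 2) := by
    rw [← card_pairsWith_periodicTaxicabDist_eq hm hmx hmy, ← card_latticeSites Lx Ly]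
    exact sum_card_pairsWith_powersetCard _ hN
  have hchoose : ((Lx * Ly - 2).choose (N - 2) : ℚ) * (Lx * Ly * (Lx * Ly - 1))
      = (Lx * Ly).choose N * (N * (N - 1)) := by
    have := congrArg (Nat.cast : ℕ → ℚ) (Nat.choose_sub_two_mul (L := Lx * Ly) hN)
    push_cast [Nat.cast_sub (by omega : 1 ≤ Lx * Ly), Nat.cast_sub (by omega : 1 ≤ N)] at this
    exact this
  have hL : (2 : ℚ) ≤ Lx * Ly := by exact_mod_cast hN.trans hNle
  have hC : ((Lx * Ly).choose N : ℚ) ≠ 0 := by exact_mod_cast (Nat.choose_pos hNle).ne'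
  rw [← Nat.cast_sum, hsum, div_eq_div_iff hC (by linarith)]
  push_cast
  linear_combination 2 * m * hchoose

/-- If `N` sites of the `Lx × Ly` lattice are occupied uniformly at random, the expected
number of unordered pairs of occupied sites at periodic taxicab distance exactly `m`
is `2 m N (N − 1) / (Lx Ly − 1)`. -/
theorem expected_periodic_taxicab_pair_count (Lx Ly m N : ℕ)
    (hLx : 0 < Lx) (hLy : 0 < Ly) (hm : 0 < m)
    (hmx : 2 * m < Lx) (hmy : 2 * m < Ly) (hN : 2 ≤ N) (hNle : N ≤ Lx * Ly) :
    (∑ M ∈ (latticeSites Lx Ly).powersetCard N, (pairCount Lx Ly m M : ℚ))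
        / ((Lx * Ly).choose N)
      = 2 * m * N * ((N : ℚ) - 1) / ((Lx : ℚ) * (Ly : ℚ) - 1) :=
  expected_periodic_taxicab_pair_count_general Lx Ly m N hm hmx hmy hN hNle
end
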